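/- Let A and B be finite nonempty sets, let (p_{ab})_{(a,b)∈A×B} be a probability distribution with marginal p_b := ∑_a p_{ab}, and assume p_b > 0 for every b ∈ B. Let ρ_{ab} be density matrices on ℂ^m for each (a,b), and let {|b⟩⟨b|}_{b∈B} denote the diagonal standard basis matrix units on ℂ^{|B|}. Then the Holevo information of the ensemble {p_{ab}, ρ_{ab} ⊗ |b⟩⟨b|} satisfies χ({p_{ab}, ρ_{ab} ⊗ |b⟩⟨b|}) = H((p_b)_b) + ∑_b p_b · χ({p_{ab}/p_b, ρ_{ab}}_{a∈A}). -/

import Mathlib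

/-!
Tensoring with the flags `|b⟩⟨b|` makes the average state block diagonal, its `b`-th block being
`p_b σ_b` with `σ_b = ∑_a (p_{ab}/p_b) ρ_{ab}`, while `ρ_{ab} ⊗ |b⟩⟨b|` has the spectrum of `ρ_{ab}`
padded with zeros. Von Neumann entropy is additive over blocks (the characteristic polynomial of a
block-diagonal matrix is the product of those of its blocks), and `S(c σ) = c S(σ) - c log₂ c` for
a unit-trace `σ`, because `(c x) log (c x) = x (c log c) + c (x log x)`. Summing over `b` gives
`H(p_b) + ∑_b p_b S(σ_b)`; subtracting the average entropy `∑_{ab} p_{ab} S(ρ_{ab})` gives the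
claim.
-/

open scoped Kronecker BigOperators ComplexOrder

/-- Von Neumann entropy (base 2) of a matrix, via eigenvalues when Hermitian. -/
noncomputable def vNEntropy {n : Type*} [Fintype n] [DecidableEq n] (ρ : Matrix n n ℂ) : ℝ :=
  if h : ρ.IsHermitian then -∑ k, h.eigenvalues k * Real.logb 2 (h.eigenvalues k) else 0

/-- A density matrix: positive semidefinite with trace one. -/
def IsDensityMatrix {n : Type*} [Fintype n] [DecidableEq n] (ρ : Matrix n n ℂ) : Prop :=
  ρ.PosSemidef ∧ ρ.trace = 1

/-- Shannon entropy (base 2). -/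
noncomputable def shannonH {I : Type*} [Fintype I] (p : I → ℝ) : ℝ :=
  -∑ i, p i * Real.logb 2 (p i)

/-- Holevo information of an ensemble. -/
noncomputable def holevo {I n : Type*} [Fintype I] [Fintype n] [DecidableEq n]
    (p : I → ℝ) (ρ : I → Matrix n n ℂ) : ℝ :=
  vNEntropy (∑ i, (p i : ℂ) • ρ i) - ∑ i, p i * vNEntropy (ρ i)

open Polynomial

theorem Real.mul_mul_logb_mul (b x y : ℝ) :
    x * y * Real.logb b (x * y) = y * (x * Real.logb b x) + x * (y * Real.logb b y) := by
  rcases eq_or_ne x 0 with rfl | hx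
  · simp
  rcases eq_or_ne y 0 with rfl | hy
  · simp
  rw [Real.logb_mul hx hy]
  ring

namespace Matrix

variable {n o : Type*}

theorem IsHermitian.real_smul {A : Matrix n n ℂ} (hA : A.IsHermitian) (c : ℝ) :
    ((c : ℂ) • A).IsHermitian :=
  hA.smul (Complex.conj_ofReal c)

theorem kronecker_single_eq_blockDiagonal [DecidableEq o] {R : Type*} [CommSemiring R]
    (A : Matrix n n R) (b : o) :
    A ⊗ₖ single b b (1 : R) = blockDiagonal (Pi.single b A) := by
  ext ⟨i, b₁⟩ ⟨j, b₂⟩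
  simp only [kroneckerMap_apply, single_apply, blockDiagonal_apply, Pi.single_apply]
  grind [Matrix.zero_apply]

theorem sum_smul_kronecker_single [Fintype o] [DecidableEq o] {ι R : Type*} [Fintype ι]
    [CommSemiring R] (p : ι × o → R) (A : ι × o → Matrix n n R) :
    ∑ ab, p ab • (A ab ⊗ₖ single ab.2 ab.2 (1 : R)) =
      blockDiagonal fun b => ∑ a, p (a, b) • A (a, b) := by
  simp_rw [kronecker_single_eq_blockDiagonal, ← blockDiagonal_smul,
    ← blockDiagonalAddMonoidHom_apply, ← map_sum]
  congr 1
  ext b : 1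
  simp [Finset.sum_apply, Pi.single_apply, Fintype.sum_prod_type]

theorem isHermitian_sum_real_smul {ι : Type*} [Fintype ι] (w : ι → ℝ) {A : ι → Matrix n n ℂ}
    (hA : ∀ i, (A i).IsHermitian) : (∑ i, (w i : ℂ) • A i).IsHermitian :=
  isHermitian_iff_isSelfAdjoint.mpr <|
    isSelfAdjoint_sum _ fun i _ => isHermitian_iff_isSelfAdjoint.mp <| (hA i).real_smul (w i)

theorem trace_sum_smul_of_trace_eq_one [Fintype n] {ι R : Type*} [Fintype ι] [Semiring R]
    (c : ι → R) {A : ι → Matrix n n R} (hA : ∀ i, (A i).trace = 1) :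
    (∑ i, c i • A i).trace = ∑ i, c i := by
  simp [trace_sum, trace_smul, hA]

variable [Fintype n] [DecidableEq n] [Fintype o] [DecidableEq o]

theorem charpoly_blockDiagonal {R : Type*} [CommRing R] (M : o → Matrix n n R) :
    (blockDiagonal M).charpoly = ∏ b, (M b).charpoly := by
  have h : charmatrix (blockDiagonal M) = blockDiagonal fun b => charmatrix (M b) := by
    ext ⟨i, b⟩ ⟨j, b'⟩
    by_cases hb : b = b' <;> by_cases hij : i = j <;>
      simp [blockDiagonal_apply, hb, hij]
  rw [charpoly, h, det_blockDiagonal]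
  rfl

theorem IsHermitian.charpoly_real_smul {A : Matrix n n ℂ} (hA : A.IsHermitian) (c : ℝ) :
    ((c : ℂ) • A).charpoly = ∏ i, (X - C ((c * hA.eigenvalues i : ℝ) : ℂ)) := by
  have hdiag : (c : ℂ) • diagonal (RCLike.ofReal ∘ hA.eigenvalues) =
      diagonal fun i => ((c * hA.eigenvalues i : ℝ) : ℂ) := by
    ext i j
    by_cases hij : i = j <;> simp [hij]
  conv_lhs => rw [hA.spectral_theorem, ← map_smul, hdiag, Unitary.conjStarAlgAut_apply,
    charpoly_mul_comm, ← mul_assoc]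
  simp [charpoly_diagonal]

theorem IsHermitian.sum_eigenvalues_eq_of_charpoly {ι : Type*} [Fintype ι] {A : Matrix n n ℂ}
    (hA : A.IsHermitian) (f : ℝ → ℝ) {μ : ι → ℝ}
    (h : A.charpoly = ∏ i, (X - C (μ i : ℂ))) :
    ∑ k, f (hA.eigenvalues k) = ∑ i, f (μ i) := by
  have hroots := hA.roots_charpoly_eq_eigenvalues
  rw [h, Finset.prod_eq_multiset_prod,
    show (fun i => X - C (μ i : ℂ)) = (fun a => X - C a) ∘ fun i => (μ i : ℂ) from rfl,
    ← Multiset.map_map, roots_multiset_prod_X_sub_C] at hroots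
  have := congrArg (fun s : Multiset ℂ => (s.map fun z => f z.re).sum) hroots
  simp only [Multiset.map_map] at this
  rw [Finset.sum_eq_multiset_sum, Finset.sum_eq_multiset_sum]
  convert this.symm using 2 <;> simp

end Matrix

open Matrix

section Entropy

variable {n o : Type*} [Fintype n] [DecidableEq n] [Fintype o] [DecidableEq o]

theorem vNEntropy_of_isHermitian {A : Matrix n n ℂ} (hA : A.IsHermitian) :
    vNEntropy A = -∑ k, hA.eigenvalues k * Real.logb 2 (hA.eigenvalues k) :=
  dif_pos hA

theorem vNEntropy_eq_of_charpoly {ι : Type*} [Fintype ι] {A : Matrix n n ℂ} (hA : A.IsHermitian)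
    {μ : ι → ℝ} (h : A.charpoly = ∏ i, (X - C (μ i : ℂ))) :
    vNEntropy A = -∑ i, μ i * Real.logb 2 (μ i) := by
  rw [vNEntropy_of_isHermitian hA,
    hA.sum_eigenvalues_eq_of_charpoly (fun x => x * Real.logb 2 x) h]

theorem vNEntropy_zero : vNEntropy (0 : Matrix n n ℂ) = 0 := by
  rw [vNEntropy_of_isHermitian isHermitian_zero,
    isHermitian_zero.eigenvalues_eq_zero_iff.mpr rfl]
  simp

theorem vNEntropy_blockDiagonal (M : o → Matrix n n ℂ) (hM : ∀ b, (M b).IsHermitian) :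
    vNEntropy (blockDiagonal M) = ∑ b, vNEntropy (M b) := by
  have hch : (blockDiagonal M).charpoly =
      ∏ bk : o × n, (X - C ((hM bk.1).eigenvalues bk.2 : ℂ)) := by
    rw [charpoly_blockDiagonal, Fintype.prod_prod_type]
    exact Finset.prod_congr rfl fun b _ => (hM b).charpoly_eq
  rw [vNEntropy_eq_of_charpoly (isHermitian_blockDiagonal_iff.mpr hM) hch,
    Fintype.sum_prod_type, ← Finset.sum_neg_distrib]
  exact Finset.sum_congr rfl fun b _ => (vNEntropy_of_isHermitian (hM b)).symm

theorem vNEntropy_real_smul {A : Matrix n n ℂ} (hA : A.IsHermitian) (htr : A.trace = 1) (c : ℝ) :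
    vNEntropy ((c : ℂ) • A) = c * vNEntropy A - c * Real.logb 2 c := by
  have hsum : ∑ k, hA.eigenvalues k = 1 := by
    have h := hA.trace_eq_sum_eigenvalues.symm.trans htr
    simp only [Complex.coe_algebraMap] at h
    exact_mod_cast h
  rw [vNEntropy_eq_of_charpoly (hA.real_smul c) (hA.charpoly_real_smul c),
    vNEntropy_of_isHermitian hA]
  simp_rw [Real.mul_mul_logb_mul, Finset.sum_add_distrib, ← Finset.sum_mul, ← Finset.mul_sum,
    hsum]
  ring

theorem vNEntropy_kronecker_single {A : Matrix n n ℂ} (hA : A.IsHermitian) (b : o) :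
    vNEntropy (A ⊗ₖ single b b (1 : ℂ)) = vNEntropy A := by
  have hblock : ∀ b', (Pi.single b A : o → Matrix n n ℂ) b' |>.IsHermitian := by
    intro b'
    rcases eq_or_ne b' b with rfl | h
    · simp [hA]
    · simp [h]
  rw [kronecker_single_eq_blockDiagonal, vNEntropy_blockDiagonal _ hblock,
    Fintype.sum_eq_single b fun b' h => by simp [h, vNEntropy_zero]]
  simp

end Entropy

theorem stmt4_general {A B : Type} [Fintype A] [Fintype B] [DecidableEq B]
    (m : ℕ) (p : A × B → ℝ)
    (pB : B → ℝ) (hpB : ∀ b, pB b = ∑ a, p (a, b)) (hpBpos : ∀ b, 0 < pB b)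
    (ρ : A × B → Matrix (Fin m) (Fin m) ℂ) (hρ : ∀ ab, IsDensityMatrix (ρ ab)) :
    holevo p (fun ab => ρ ab ⊗ₖ Matrix.single ab.2 ab.2 (1 : ℂ)) =
      shannonH pB + ∑ b, pB b * holevo (fun a => p (a, b) / pB b) (fun a => ρ (a, b)) := by
  have hρH : ∀ ab, (ρ ab).IsHermitian := fun ab => (hρ ab).1.1
  set σ : B → Matrix (Fin m) (Fin m) ℂ :=
    fun b => ∑ a, ((p (a, b) / pB b : ℝ) : ℂ) • ρ (a, b) with hσ
  have hσH : ∀ b, (σ b).IsHermitian := fun b =>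
    isHermitian_sum_real_smul _ fun a => hρH (a, b)
  have hσtr : ∀ b, (σ b).trace = 1 := fun b => by
    rw [trace_sum_smul_of_trace_eq_one _ fun a => (hρ (a, b)).2, ← Complex.ofReal_sum,
      ← Finset.sum_div, ← hpB, div_self (hpBpos b).ne', Complex.ofReal_one]
  have hblock : ∀ b, ∑ a, (p (a, b) : ℂ) • ρ (a, b) = (pB b : ℂ) • σ b := fun b => by
    simp_rw [hσ, Finset.smul_sum, smul_smul, ← Complex.ofReal_mul,
      mul_div_cancel₀ _ (hpBpos b).ne']
  have hcond : ∀ b, pB b * holevo (fun a => p (a, b) / pB b) (fun a => ρ (a, b)) =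
      pB b * vNEntropy (σ b) - ∑ a, p (a, b) * vNEntropy (ρ (a, b)) := fun b => by
    simp_rw [holevo, mul_sub, Finset.mul_sum, ← mul_assoc, mul_div_cancel₀ _ (hpBpos b).ne']
    rfl
  rw [holevo, sum_smul_kronecker_single, funext hblock,
    vNEntropy_blockDiagonal _ fun b => (hσH b).real_smul _]
  simp_rw [vNEntropy_real_smul (hσH _) (hσtr _), vNEntropy_kronecker_single (hρH _), hcond,
    shannonH, Finset.sum_sub_distrib, Fintype.sum_prod_type_right]
  ring

/-- Decomposition of the local Holevo information (Eq. (chibob) of the paper):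
`χ({p_{ab}, ρ_{ab} ⊗ |b⟩⟨b|}) = H({p_b}) + ∑ b, p_b * χ({p_{ab}/p_b, ρ_{ab}})`. -/
theorem stmt4 {A B : Type} [Fintype A] [Nonempty A] [Fintype B] [DecidableEq B] [Nonempty B]
    (m : ℕ) (p : A × B → ℝ) (hp : ∀ ab, 0 ≤ p ab) (hp1 : ∑ ab, p ab = 1)
    (pB : B → ℝ) (hpB : ∀ b, pB b = ∑ a, p (a, b)) (hpBpos : ∀ b, 0 < pB b)
    (ρ : A × B → Matrix (Fin m) (Fin m) ℂ) (hρ : ∀ ab, IsDensityMatrix (ρ ab)) :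
    holevo p (fun ab => ρ ab ⊗ₖ Matrix.single ab.2 ab.2 (1 : ℂ)) =
      shannonH pB + ∑ b, pB b * holevo (fun a => p (a, b) / pB b) (fun a => ρ (a, b)) :=
  stmt4_general m p pB hpB hpBpos ρ hρ
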